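/- Let U ⊆ ℝ^N be open, (f_n) ∈ 𝒜(U), and K ⋐ U. Then there exist ψ ∈ 𝒟₀, an open set V with K ⊆ V and V ⊆ U, and g ∈ 𝒞(V) such that f_n∗ψ ⇉ g on K as n → ∞, and (f_n∗ψ) ∼ (g, g, g, …) (the constant sequence) as fundamental sequences on V. -/

import Mathlib

open MeasureTheory Filter Topology Metric Pointwise

noncomputable section

/-- `ℝ^N` with the Euclidean metric. -/
abbrev Euc (N : ℕ) : Type := EuclideanSpace ℝ (Fin N)

/-- `𝒟`: smooth real-valued functions with compact support on `ℝ^N`. -/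
def IsTest {N : ℕ} (φ : Euc N → ℝ) : Prop :=
  ContDiff ℝ (⊤ : ℕ∞) φ ∧ HasCompactSupport φ

/-- `s(φ) = inf {ε > 0 : supp φ ⊆ B_ε}`. -/
def sRad {N : ℕ} (φ : Euc N → ℝ) : ℝ :=
  sInf {ε : ℝ | 0 < ε ∧ tsupport φ ⊆ ball (0 : Euc N) ε}

/-- `𝒟₀`: test functions that are nonnegative with integral 1. -/
def IsD0 {N : ℕ} (φ : Euc N → ℝ) : Prop :=
  IsTest φ ∧ (∀ x, 0 ≤ φ x) ∧ (∫ x, φ x) = 1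

/-- Delta sequences: sequences in `𝒟₀` with `s(φ_n) → 0`. -/
def IsDeltaSeq {N : ℕ} (φ : ℕ → Euc N → ℝ) : Prop :=
  (∀ n, IsD0 (φ n)) ∧ Tendsto (fun n => sRad (φ n)) atTop (𝓝 0)

/-- Convolution `(f∗φ)(x) = ∫ f(x−y)φ(y) dy` (with the convention that the
integrand vanishes wherever `φ` does). -/
def convol {N : ℕ} (f φ : Euc N → ℝ) : Euc N → ℝ :=
  fun x => ∫ y, f (x - y) * φ y

/-- `A^{-ε} = (closure (Aᶜ + B_ε))ᶜ`. -/
def erode {N : ℕ} (A : Set (Euc N)) (ε : ℝ) : Set (Euc N) :=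
  (closure (Aᶜ + ball (0 : Euc N) ε))ᶜ

/-- `‖f‖_K`, the sup of `|f|` over `K`. -/
def supNormOn {N : ℕ} (f : Euc N → ℝ) (K : Set (Euc N)) : ℝ :=
  ⨆ x ∈ K, |f x|

/-- Fundamental sequence on `U`: a sequence of continuous functions such that for
every compact `K ⊆ U` there is a delta sequence `δ` with `(f_n∗δ_m)_n` uniformly
convergent on `K` for every `m` (all but finitely many `m`, per the paper's
convention on definedness of the convolutions). -/
def IsFundamental {N : ℕ} (f : ℕ → Euc N → ℝ) (U : Set (Euc N)) : Prop :=
  (∀ n, ContinuousOn (f n) U) ∧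
  ∀ K : Set (Euc N), IsCompact K → K ⊆ U →
    ∃ δ : ℕ → Euc N → ℝ, IsDeltaSeq δ ∧ ∃ m₀ : ℕ, ∀ m ≥ m₀,
      ∃ g : Euc N → ℝ, TendstoUniformlyOn (fun n => convol (f n) (δ m)) g atTop K

/-- `(f_n) ∼ (g_n)` on `U`: for every compact `K ⊆ U` there is a delta sequence `φ`
with `(f_n − g_n)∗φ_m ⇉ 0` on `K` as `n → ∞`, for every (sufficiently large) `m`. -/
def SimTo {N : ℕ} (f g : ℕ → Euc N → ℝ) (U : Set (Euc N)) : Prop :=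
  ∀ K : Set (Euc N), IsCompact K → K ⊆ U →
    ∃ φ : ℕ → Euc N → ℝ, IsDeltaSeq φ ∧ ∃ m₀ : ℕ, ∀ m ≥ m₀,
      TendstoUniformlyOn (fun n => convol (fun y => f n y - g n y) (φ m)) 0 atTop K

section AuxLemmas

open scoped Convolution

variable {N : ℕ}

lemma sub_mem_cthickening' {K : Set (Euc N)} {x y : Euc N} {a b : ℝ} (ha : 0 ≤ a) (hb : 0 ≤ b)
    (hx : x ∈ cthickening a K) (hy : ‖y‖ ≤ b) : x - y ∈ cthickening (a + b) K := by
  rw [mem_cthickening_iff] at hx ⊢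
  have h1 : edist (x - y) x ≤ ENNReal.ofReal b := by
    rw [edist_dist]
    apply ENNReal.ofReal_le_ofReal
    rw [dist_eq_norm, sub_sub_cancel_left, norm_neg]
    exact hy
  calc EMetric.infEdist (x - y) K ≤ EMetric.infEdist x K + edist (x - y) x :=
        EMetric.infEdist_le_infEdist_add_edist
    _ ≤ ENNReal.ofReal a + ENNReal.ofReal b := add_le_add hx h1
    _ = ENNReal.ofReal (a + b) := (ENNReal.ofReal_add ha hb).symm

lemma tsupport_subset_ball_of_sRad_lt {φ : Euc N → ℝ} (hφ : HasCompactSupport φ) {r : ℝ}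
    (h : sRad φ < r) : tsupport φ ⊆ ball 0 r := by
  have hne : {ε : ℝ | 0 < ε ∧ tsupport φ ⊆ ball (0 : Euc N) ε}.Nonempty := by
    obtain ⟨R, hR, hRs⟩ := (IsCompact.isBounded hφ).subset_ball_lt 0 0
    exact ⟨R, hR, hRs⟩
  obtain ⟨ε, ⟨hε0, hεs⟩, hεr⟩ := exists_lt_of_csInf_lt hne h
  exact hεs.trans (ball_subset_ball hεr.le)

lemma convol_integrand_integrable {F ψ : Euc N → ℝ} (hF : Continuous F) (hψc : Continuous ψ)
    (hψs : HasCompactSupport ψ) (x : Euc N) :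
    Integrable (fun y => F (x - y) * ψ y) := by
  apply Continuous.integrable_of_hasCompactSupport
  · exact (hF.comp (continuous_const.sub continuous_id)).mul hψc
  · exact hψs.mul_left

lemma convol_congr_at {f F φ : Euc N → ℝ} {x : Euc N}
    (h : ∀ y ∈ tsupport φ, f (x - y) = F (x - y)) : convol f φ x = convol F φ x := by
  unfold convol
  apply integral_congr_ae
  apply Filter.Eventually.of_forall
  intro y
  show f (x - y) * φ y = F (x - y) * φ y
  by_cases hy : y ∈ tsupport φ
  · rw [h y hy]
  · rw [image_eq_zero_of_notMem_tsupport hy, mul_zero, mul_zero]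

lemma convol_sub_eq {F G ψ : Euc N → ℝ} (hF : Continuous F) (hG : Continuous G)
    (hψc : Continuous ψ) (hψs : HasCompactSupport ψ) (x : Euc N) :
    convol (fun z => F z - G z) ψ x = convol F ψ x - convol G ψ x := by
  unfold convol
  rw [← integral_sub (convol_integrand_integrable hF hψc hψs x)
      (convol_integrand_integrable hG hψc hψs x)]
  apply integral_congr_ae
  apply Filter.Eventually.of_forall
  intro y
  ring

lemma convol_continuous {F ψ : Euc N → ℝ} (hF : Continuous F) (hψc : Continuous ψ)
    (hψs : HasCompactSupport ψ) : Continuous (convol F ψ) := by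
  have h : convol F ψ = (ψ ⋆[ContinuousLinearMap.mul ℝ ℝ, volume] F) := by
    funext x
    rw [convolution_def]
    show (∫ y, F (x - y) * ψ y) = _
    apply integral_congr_ae
    apply Filter.Eventually.of_forall
    intro y
    simp [mul_comm]
  rw [h]
  exact hψs.continuous_convolution_left _ hψc (hF.locallyIntegrable (μ := volume))

lemma convol_dist_le {ψ F G : Euc N → ℝ} {x : Euc N} {r M : ℝ}
    (hψc : Continuous ψ) (hψs : HasCompactSupport ψ) (hψ0 : ∀ y, 0 ≤ ψ y)
    (hψ1 : (∫ y, ψ y) = 1) (hsupp : tsupport ψ ⊆ closedBall 0 r)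
    (hF : Continuous F) (hG : Continuous G) (hM : 0 ≤ M)
    (hbd : ∀ z ∈ closedBall x r, |F z - G z| ≤ M) :
    |convol F ψ x - convol G ψ x| ≤ M := by
  have hiF := convol_integrand_integrable hF hψc hψs x
  have hiG := convol_integrand_integrable hG hψc hψs x
  have hψint : Integrable ψ volume := hψc.integrable_of_hasCompactSupport hψs
  have hiD : Integrable (fun y => (F (x - y) - G (x - y)) * ψ y) := by
    refine (hiF.sub hiG).congr (Filter.Eventually.of_forall fun y => ?_)
    show F (x - y) * ψ y - G (x - y) * ψ y = _
    ring
  have h1 : convol F ψ x - convol G ψ x = ∫ y, (F (x - y) - G (x - y)) * ψ y := by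
    show (∫ y, F (x - y) * ψ y) - (∫ y, G (x - y) * ψ y) = _
    rw [← integral_sub hiF hiG]
    apply integral_congr_ae
    apply Filter.Eventually.of_forall
    intro y
    ring
  rw [h1]
  have h2 : |∫ y, (F (x - y) - G (x - y)) * ψ y| ≤ ∫ y, |(F (x - y) - G (x - y)) * ψ y| := by
    have := norm_integral_le_integral_norm (μ := volume) (fun y => (F (x - y) - G (x - y)) * ψ y)
    simp only [Real.norm_eq_abs] at this
    exact this
  refine h2.trans ?_
  have h3 : (∫ y, |(F (x - y) - G (x - y)) * ψ y|) ≤ ∫ y, M * ψ y := by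
    apply integral_mono hiD.abs (hψint.const_mul M)
    intro y
    by_cases hy : y ∈ tsupport ψ
    · have hz : x - y ∈ closedBall x r := by
        rw [mem_closedBall, dist_eq_norm, sub_sub_cancel_left, norm_neg]
        have h4 := hsupp hy
        rwa [mem_closedBall, dist_zero_right] at h4
      have h5 := hbd _ hz
      show |(F (x - y) - G (x - y)) * ψ y| ≤ M * ψ y
      rw [abs_mul, abs_of_nonneg (hψ0 y)]
      exact mul_le_mul_of_nonneg_right h5 (hψ0 y)
    · show |(F (x - y) - G (x - y)) * ψ y| ≤ M * ψ y
      rw [image_eq_zero_of_notMem_tsupport hy, mul_zero, mul_zero, abs_zero]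
  refine h3.trans ?_
  rw [integral_const_mul, hψ1, mul_one]

lemma exists_cont_extension {A : Set (Euc N)} (hA : IsClosed A) {f : Euc N → ℝ}
    (hf : ContinuousOn f A) : ∃ F : Euc N → ℝ, Continuous F ∧ ∀ x ∈ A, F x = f x := by
  obtain ⟨g, hg⟩ := ContinuousMap.exists_restrict_eq hA ⟨A.restrict f, hf.restrict⟩
  exact ⟨g, g.continuous, fun x hx => ContinuousMap.congr_fun hg ⟨x, hx⟩⟩

end AuxLemmas

/-- If `U ⊆ ℝ^N` is open, `(f_n) ∈ 𝒜(U)` and `K ⋐ U`, then there are `ψ ∈ 𝒟₀`,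
an open set `V` with `K ⊆ V ⊆ U`, and `g ∈ 𝒞(V)` such that `f_n∗ψ ⇉ g` on `K`
and `(f_n∗ψ) ∼ (g, g, …)` as fundamental sequences on `V`. -/
theorem funccor {N : ℕ} (U : Set (Euc N)) (hU : IsOpen U)
    (f : ℕ → Euc N → ℝ) (hf : IsFundamental f U)
    (K : Set (Euc N)) (hK : IsCompact K) (hKU : K ⊆ U) :
    ∃ (ψ : Euc N → ℝ) (V : Set (Euc N)) (g : Euc N → ℝ),
      IsD0 ψ ∧ IsOpen V ∧ K ⊆ V ∧ V ⊆ U ∧ ContinuousOn g V ∧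
      TendstoUniformlyOn (fun n => convol (f n) ψ) g atTop K ∧
      IsFundamental (fun n => convol (f n) ψ) V ∧
      IsFundamental (fun _ => g) V ∧
      SimTo (fun n => convol (f n) ψ) (fun _ => g) V := by
  obtain ⟨hfc, hfK⟩ := hf
  obtain ⟨d, hd, hdU⟩ := hK.exists_cthickening_subset_open hU hKU
  have hK₄cpt : IsCompact (cthickening d K) := hK.cthickening
  obtain ⟨δs, hδs, m₀, hm⟩ := hfK (cthickening d K) hK₄cpt hdU
  have hev : ∀ᶠ m in atTop, sRad (δs m) < d / 4 := hδs.2.eventually_lt_const (by positivity)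
  obtain ⟨m, hm1, hm2⟩ := (hev.and (eventually_ge_atTop m₀)).exists
  set ψ := δs m with hψdef
  have hψ0 : IsD0 ψ := hδs.1 m
  have hψc : Continuous ψ := hψ0.1.1.continuous
  have hψs : HasCompactSupport ψ := hψ0.1.2
  have hψsupp : tsupport ψ ⊆ closedBall 0 (d / 4) :=
    (tsupport_subset_ball_of_sRad_lt hψs hm1).trans ball_subset_closedBall
  obtain ⟨g, hg⟩ := hm m hm2
  set V := thickening (d / 4) K with hVdef
  set C := cthickening (d / 2) K with hCdef
  have hC₃K₄ : cthickening (d / 2 + d / 4) K ⊆ cthickening d K :=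
    cthickening_mono (by linarith) K
  have hCK₄ : C ⊆ cthickening d K := cthickening_mono (by linarith) K
  have hVC : V ⊆ C :=
    (thickening_subset_cthickening _ _).trans (cthickening_mono (by linarith) K)
  have hKV : K ⊆ V := self_subset_thickening (by positivity) K
  have hVU : V ⊆ U := fun x hx => hdU (hCK₄ (hVC hx))
  have hKK₄ : K ⊆ cthickening d K := self_subset_cthickening K
  -- continuous global extensions of the `f n` from `cthickening (d/2 + d/4) K`
  have hFex : ∀ n, ∃ Fn : Euc N → ℝ, Continuous Fn ∧
      ∀ x ∈ cthickening (d / 2 + d / 4) K, Fn x = f n x := fun n =>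
    exists_cont_extension isClosed_cthickening ((hfc n).mono (hC₃K₄.trans hdU))
  choose F hFc hFeq using hFex
  have hsub : ∀ x ∈ C, ∀ y ∈ tsupport ψ, x - y ∈ cthickening (d / 2 + d / 4) K := by
    intro x hx y hy
    have hy' : ‖y‖ ≤ d / 4 := by
      have h4 := hψsupp hy
      rwa [mem_closedBall, dist_zero_right] at h4
    exact sub_mem_cthickening' (by positivity) (by positivity) hx hy'
  have heqC : ∀ n, ∀ x ∈ C, convol (f n) ψ x = convol (F n) ψ x := fun n x hx =>
    convol_congr_at fun y hy => (hFeq n _ (hsub x hx y hy)).symm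
  have hHcont : ∀ n, Continuous (convol (F n) ψ) := fun n => convol_continuous (hFc n) hψc hψs
  have hcontC : ∀ n, ContinuousOn (convol (f n) ψ) C := fun n =>
    ((hHcont n).continuousOn).congr fun x hx => heqC n x hx
  have hgC : ContinuousOn g C :=
    (hg.mono hCK₄).continuousOn (Filter.Eventually.of_forall hcontC).frequently
  obtain ⟨G, hGc, hGeq⟩ := exists_cont_extension isClosed_cthickening hgC
  -- membership helper for subcompacts of `V`
  have hmemC : ∀ (K' : Set (Euc N)) (ρ : ℝ), 0 ≤ ρ → cthickening ρ K' ⊆ C →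
      ∀ x ∈ K', ∀ y, ‖y‖ ≤ ρ → x - y ∈ C := by
    intro K' ρ hρ hρC x hx y hy
    have h0 : x ∈ cthickening (0 : ℝ) K' := self_subset_cthickening _ hx
    have h1 := sub_mem_cthickening' le_rfl hρ h0 hy
    rw [zero_add] at h1
    exact hρC h1
  -- the core estimate
  have est : ∀ (K' : Set (Euc N)) (ρ : ℝ) (m' : ℕ), 0 < ρ → cthickening ρ K' ⊆ C →
      sRad (δs m') < ρ → ∀ ε, 0 < ε → ∀ n,
      (∀ z ∈ cthickening d K, dist (g z) (convol (f n) ψ z) < ε) →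
      ∀ x ∈ K', |convol G (δs m') x - convol (convol (F n) ψ) (δs m') x| ≤ ε := by
    intro K' ρ m' hρ hρC hsr ε hε n hn x hx
    have hφ0 : IsD0 (δs m') := hδs.1 m'
    have hφc : Continuous (δs m') := hφ0.1.1.continuous
    have hφs : HasCompactSupport (δs m') := hφ0.1.2
    have hφsupp : tsupport (δs m') ⊆ closedBall 0 ρ :=
      (tsupport_subset_ball_of_sRad_lt hφs hsr).trans ball_subset_closedBall
    apply convol_dist_le hφc hφs hφ0.2.1 hφ0.2.2 hφsupp hGc (hHcont n) hε.le
    intro z hz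
    have hzC : z ∈ C :=
      hρC (mem_cthickening_of_dist_le z x ρ K' hx (by rwa [mem_closedBall] at hz))
    rw [hGeq z hzC, ← heqC n z hzC, ← Real.dist_eq]
    exact (hn z (hCK₄ hzC)).le
  refine ⟨ψ, V, g, hψ0, isOpen_thickening, hKV, hVU, hgC.mono hVC, hg.mono hKK₄, ?_, ?_, ?_⟩
  · -- `IsFundamental (fun n => convol (f n) ψ) V`
    constructor
    · exact fun n => (hcontC n).mono hVC
    · intro K' hK' hK'V
      obtain ⟨ρ, hρ, hρV⟩ := hK'.exists_cthickening_subset_open isOpen_thickening hK'V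
      have hρC : cthickening ρ K' ⊆ C := hρV.trans hVC
      obtain ⟨a, ha⟩ := Filter.eventually_atTop.1 (hδs.2.eventually_lt_const hρ)
      refine ⟨δs, hδs, a, fun m' hm' => ⟨convol g (δs m'), ?_⟩⟩
      rw [Metric.tendstoUniformlyOn_iff]
      intro ε hε
      have hg' := Metric.tendstoUniformlyOn_iff.1 hg (ε / 2) (by positivity)
      filter_upwards [hg'] with n hn x hx
      have hsr := ha m' hm'
      have hφsupp : tsupport (δs m') ⊆ closedBall 0 ρ :=
        (tsupport_subset_ball_of_sRad_lt (hδs.1 m').1.2 hsr).trans ball_subset_closedBall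
      have hmem : ∀ y ∈ tsupport (δs m'), x - y ∈ C := by
        intro y hy
        have h4 := hφsupp hy
        rw [mem_closedBall, dist_zero_right] at h4
        exact hmemC K' ρ hρ.le hρC x hx y h4
      have e1 : convol g (δs m') x = convol G (δs m') x :=
        convol_congr_at fun y hy => (hGeq _ (hmem y hy)).symm
      have e2 : convol (convol (f n) ψ) (δs m') x = convol (convol (F n) ψ) (δs m') x :=
        convol_congr_at fun y hy => heqC n _ (hmem y hy)
      rw [Real.dist_eq, e1, e2]
      have h5 := est K' ρ m' hρ hρC hsr (ε / 2) (by positivity) n hn x hx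
      linarith [abs_nonneg (convol G (δs m') x - convol (convol (F n) ψ) (δs m') x)]
  · -- `IsFundamental (fun _ => g) V`
    constructor
    · exact fun _ => hgC.mono hVC
    · intro K' hK' hK'V
      refine ⟨δs, hδs, 0, fun m' _ => ⟨convol g (δs m'), ?_⟩⟩
      rw [Metric.tendstoUniformlyOn_iff]
      intro ε hε
      filter_upwards with n x hx
      simpa using hε
  · -- `SimTo`
    intro K' hK' hK'V
    obtain ⟨ρ, hρ, hρV⟩ := hK'.exists_cthickening_subset_open isOpen_thickening hK'V
    have hρC : cthickening ρ K' ⊆ C := hρV.trans hVC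
    obtain ⟨a, ha⟩ := Filter.eventually_atTop.1 (hδs.2.eventually_lt_const hρ)
    refine ⟨δs, hδs, a, fun m' hm' => ?_⟩
    rw [Metric.tendstoUniformlyOn_iff]
    intro ε hε
    have hg' := Metric.tendstoUniformlyOn_iff.1 hg (ε / 2) (by positivity)
    filter_upwards [hg'] with n hn x hx
    have hsr := ha m' hm'
    have hφ0 : IsD0 (δs m') := hδs.1 m'
    have hφsupp : tsupport (δs m') ⊆ closedBall 0 ρ :=
      (tsupport_subset_ball_of_sRad_lt hφ0.1.2 hsr).trans ball_subset_closedBall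
    have hmem : ∀ y ∈ tsupport (δs m'), x - y ∈ C := by
      intro y hy
      have h4 := hφsupp hy
      rw [mem_closedBall, dist_zero_right] at h4
      exact hmemC K' ρ hρ.le hρC x hx y h4
    have e1 : convol (fun y => convol (f n) ψ y - g y) (δs m') x =
        convol (fun z => convol (F n) ψ z - G z) (δs m') x :=
      convol_congr_at fun y hy => by
        rw [heqC n _ (hmem y hy), hGeq _ (hmem y hy)]
    have e2 : convol (fun z => convol (F n) ψ z - G z) (δs m') x =
        convol (convol (F n) ψ) (δs m') x - convol G (δs m') x :=
      convol_sub_eq (hHcont n) hGc hφ0.1.1.continuous hφ0.1.2 x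
    rw [Pi.zero_apply, Real.dist_eq, zero_sub, abs_neg, e1, e2, abs_sub_comm]
    have h5 := est K' ρ m' hρ hρC hsr (ε / 2) (by positivity) n hn x hx
    linarith [abs_nonneg (convol G (δs m') x - convol (convol (F n) ψ) (δs m') x)]
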